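/- Let (γ, δ) be a (p,w)-pair with γ ∈ Γ_s, δ ∈ Γ_{s'}, p : [1,|s|] → [1,|s'|] a monotone embedding and w ∈ W. Then there exists a unique map φ : Γ_s → Γ_{s'} such that φ(γ) = δ, every pair (μ, φ(μ)) is a (p,w)-pair, and φ(f_i μ) = f_{p(i)} φ(μ) for all galleries μ ∈ Γ_s and all i = 1,…,|s|. -/
import Mathlib

section GallerySetup

variable {W : Type} [Group W] {E : Type} [AddCommGroup E] [DistribMulAction W E]

/-- The Weyl-group element contributed by position `i` of a combinatorial gallery:
`s_{α_i}` if the gallery crosses the wall there (`γ i = true`), and `e` otherwise. -/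
def galElt (s : E → W) {r : ℕ} (α : Fin r → E) (γ : Fin r → Bool) (i : Fin r) : W :=
  if γ i then s (α i) else 1

/-- `γ^k = γ₁ ⋯ γ_k`, the product of the first `k` entries of the gallery. -/
def gpref (s : E → W) {r : ℕ} (α : Fin r → E) (γ : Fin r → Bool) (k : ℕ) : W :=
  (((List.finRange r).take k).map (galElt s α γ)).prod

/-- `β_i(γ) = γ^i (-α_i)` (here `i : Fin r` is the 0-based index of the paper's `i+1`). -/
def gbeta (s : E → W) {r : ℕ} (α : Fin r → E) (γ : Fin r → Bool) (i : Fin r) : E :=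
  gpref s α γ (i.val + 1) • (-(α i))

/-- The folding operator at position `i`: it replaces `γ_i` by `γ_i s_i`. -/
def gfold {r : ℕ} (γ : Fin r → Bool) (i : Fin r) : Fin r → Bool :=
  Function.update γ i (!(γ i))

end GallerySetup

section Aux

set_option linter.unusedSectionVars false

variable {W : Type} [Group W] {E : Type} [AddCommGroup E] [DistribMulAction W E]
variable (s : E → W) {r : ℕ} (α : Fin r → E)

lemma wsmul_zsmul (g : W) (n : ℤ) (x : E) : g • (n • x) = n • (g • x) :=
  map_zsmul (DistribMulAction.toAddMonoidHom E g) n x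

lemma s_zu (hneg : ∀ a : E, s (-a) = s a) (η : ℤˣ) (x : E) :
    s ((η : ℤ) • x) = s x := by
  rcases Int.units_eq_one_or η with h | h <;> subst h <;> simp [hneg]

lemma gpref_succ (μ : Fin r → Bool) (k : ℕ) (hk : k < r) :
    gpref s α μ (k + 1) = gpref s α μ k * galElt s α μ ⟨k, hk⟩ := by
  unfold gpref
  rw [List.take_succ]
  have h : (List.finRange r)[k]? = some ⟨k, hk⟩ := by
    rw [List.getElem?_eq_getElem (by simpa using hk)]
    simp
  rw [h]
  simp

lemma gpref_gfold (hconj : ∀ (u : W) (a : E), s (u • a) = u * s a * u⁻¹)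
    (hsq : ∀ a : E, s a * s a = 1)
    (μ : Fin r → Bool) (i : Fin r) (k : ℕ) (hk : k ≤ r) :
    gpref s α (gfold μ i) k =
      if i.val < k then s (gpref s α μ i.val • α i) * gpref s α μ k
      else gpref s α μ k := by
  induction k with
  | zero => simp [gpref]
  | succ k ih =>
    have hk' : k < r := hk
    rw [gpref_succ s α _ k hk', gpref_succ s α μ k hk', ih (le_of_lt hk')]
    rcases lt_trichotomy i.val k with h | h | h
    · have hne : i ≠ ⟨k, hk'⟩ := by
        intro he; rw [he] at h; exact lt_irrefl _ h
      have hg : galElt s α (gfold μ i) ⟨k, hk'⟩ = galElt s α μ ⟨k, hk'⟩ := by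
        unfold galElt gfold
        rw [Function.update_of_ne (Ne.symm hne)]
      rw [if_pos h, if_pos (Nat.lt_succ_of_lt h), hg, mul_assoc]
    · have hfin : (⟨k, hk'⟩ : Fin r) = i := Fin.ext h.symm
      rw [if_neg (by omega), if_pos (by omega), hfin, h]
      have hg : galElt s α (gfold μ i) i = s (α i) * galElt s α μ i := by
        unfold galElt gfold
        cases hm : μ i <;> simp [hm, hsq]
      rw [hg, hconj]
      group
    · rw [if_neg (by omega), if_neg (by omega)]
      have hne : i ≠ ⟨k, hk'⟩ := by
        intro he; rw [he] at h; exact lt_irrefl _ h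
      have hg : galElt s α (gfold μ i) ⟨k, hk'⟩ = galElt s α μ ⟨k, hk'⟩ := by
        unfold galElt gfold
        rw [Function.update_of_ne (Ne.symm hne)]
      rw [hg]

lemma s_gpref_eq (hneg : ∀ a : E, s (-a) = s a)
    (hsa : ∀ j : Fin r, s (α j) • α j = -(α j))
    (μ : Fin r → Bool) (i : Fin r) :
    s (gpref s α μ i.val • α i) = s (gbeta s α μ i) := by
  unfold gbeta
  rw [gpref_succ s α μ i.val i.isLt]
  have : (⟨i.val, i.isLt⟩ : Fin r) = i := rfl
  rw [this]
  unfold galElt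
  cases hm : μ i
  · simp only [hm, Bool.false_eq_true, if_false, mul_one]
    rw [smul_neg, hneg]
  · simp only [hm, if_true]
    rw [mul_smul, smul_neg, hsa i, neg_neg]

lemma gbeta_gfold (hconj : ∀ (u : W) (a : E), s (u • a) = u * s a * u⁻¹)
    (hneg : ∀ a : E, s (-a) = s a)
    (hsq : ∀ a : E, s a * s a = 1)
    (hsa : ∀ j : Fin r, s (α j) • α j = -(α j))
    (μ : Fin r → Bool) (i k : Fin r) :
    gbeta s α (gfold μ i) k =
      if i ≤ k then s (gbeta s α μ i) • gbeta s α μ k else gbeta s α μ k := by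
  rw [show gbeta s α (gfold μ i) k = gpref s α (gfold μ i) (k.val + 1) • (-(α k)) from rfl]
  rw [gpref_gfold s α hconj hsq μ i (k.val + 1) k.isLt]
  by_cases h : i ≤ k
  · rw [if_pos (Nat.lt_succ_of_le h), if_pos h, mul_smul,
      s_gpref_eq s α hneg hsa]
    rfl
  · have hv : (k : ℕ) < (i : ℕ) := Fin.lt_def.mp (Fin.not_le.mp h)
    rw [if_neg (by omega), if_neg h]
    rfl

lemma gfold_gfold (μ : Fin r → Bool) (i : Fin r) : gfold (gfold μ i) i = μ := by
  funext j
  unfold gfold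
  by_cases h : j = i
  · subst h; simp
  · rw [Function.update_of_ne h, Function.update_of_ne h]

lemma pair_fold {r' : ℕ} (α' : Fin r' → E) (p : Fin r → Fin r') (hp : StrictMono p) (w : W)
    (hconj : ∀ (u : W) (a : E), s (u • a) = u * s a * u⁻¹)
    (hneg : ∀ a : E, s (-a) = s a)
    (hsq : ∀ a : E, s a * s a = 1)
    (hsa : ∀ j : Fin r, s (α j) • α j = -(α j))
    (hsa' : ∀ j : Fin r', s (α' j) • α' j = -(α' j))
    (μ : Fin r → Bool) (ν : Fin r' → Bool) (i : Fin r)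
    (h : ∀ k : Fin r, ∃ η : ℤˣ, gbeta s α' ν (p k) = (η : ℤ) • (w • gbeta s α μ k)) :
    ∀ k : Fin r, ∃ η : ℤˣ, gbeta s α' (gfold ν (p i)) (p k) =
      (η : ℤ) • (w • gbeta s α (gfold μ i) k) := by
  intro k
  obtain ⟨ηk, hk⟩ := h k
  obtain ⟨ηi, hi⟩ := h i
  rw [gbeta_gfold s α' hconj hneg hsq hsa' ν (p i) (p k),
      gbeta_gfold s α hconj hneg hsq hsa μ i k]
  by_cases hik : i ≤ k
  · rw [if_pos (hp.monotone hik), if_pos hik, hk, hi]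
    refine ⟨ηk, ?_⟩
    rw [s_zu s hneg, hconj, wsmul_zsmul]
    congr 1
    rw [mul_smul, mul_smul, inv_smul_smul]
  · rw [if_neg (fun hle => hik (hp.le_iff_le.mp hle)), if_neg hik]
    exact ⟨ηk, hk⟩

end Aux

/-- Lemma: a `(p,w)`-pair `(γ, δ)` extends uniquely to a morphism of the folding category.
There exists a unique map `φ : Γ_s → Γ_{s'}` with `φ(γ) = δ` such that every `(μ, φ(μ))`
is a `(p,w)`-pair and `φ(f_i μ) = f_{p(i)} φ(μ)` for all galleries `μ` and positions `i`. -/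
theorem stmt5 {W : Type} [Group W] {E : Type} [AddCommGroup E] [DistribMulAction W E]
    (s : E → W) {r r' : ℕ} (α : Fin r → E) (α' : Fin r' → E)
    (p : Fin r → Fin r') (hp : StrictMono p) (w : W)
    (γ : Fin r → Bool) (δ : Fin r' → Bool)
    (hconj : ∀ (u : W) (a : E), s (u • a) = u * s a * u⁻¹)
    (hneg : ∀ a : E, s (-a) = s a)
    (hsq : ∀ a : E, s a * s a = 1)
    (hsa : ∀ j : Fin r, s (α j) • α j = -(α j))
    (hsa' : ∀ j : Fin r', s (α' j) • α' j = -(α' j))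
    (hpair : ∀ k : Fin r, ∃ η : ℤˣ,
      gbeta s α' δ (p k) = ((η : ℤ) • (w • gbeta s α γ k))) :
    ∃! φ : (Fin r → Bool) → (Fin r' → Bool),
      φ γ = δ ∧
      (∀ (μ : Fin r → Bool) (k : Fin r), ∃ η : ℤˣ,
        gbeta s α' (φ μ) (p k) = ((η : ℤ) • (w • gbeta s α μ k))) ∧
      (∀ (μ : Fin r → Bool) (i : Fin r), φ (gfold μ i) = gfold (φ μ) (p i)) := by
  classical
  have hpinj : Function.Injective p := hp.injective
  set φ : (Fin r → Bool) → Fin r' → Bool :=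
    fun μ j => if ∃ i, p i = j ∧ μ i ≠ γ i then !(δ j) else δ j with hφdef
  have hφγ : φ γ = δ := by
    funext j; simp [hφdef]
  have hφfold : ∀ (μ : Fin r → Bool) (i : Fin r), φ (gfold μ i) = gfold (φ μ) (p i) := by
    intro μ i0
    funext j
    by_cases hj : j = p i0
    · subst hj
      have h1 : (∃ i, p i = p i0 ∧ gfold μ i0 i ≠ γ i) ↔ ¬ (μ i0 ≠ γ i0) := by
        constructor
        · rintro ⟨i, hpi, hne⟩
          have hii : i = i0 := hpinj hpi
          subst hii
          have : gfold μ i i = !(μ i) := by simp [gfold]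
          rw [this] at hne
          cases hm : μ i <;> cases hg : γ i <;> simp_all
        · intro hne
          refine ⟨i0, rfl, ?_⟩
          have : gfold μ i0 i0 = !(μ i0) := by simp [gfold]
          rw [this]
          cases hm : μ i0 <;> cases hg : γ i0 <;> simp_all
      show (if ∃ i, p i = p i0 ∧ gfold μ i0 i ≠ γ i then !(δ (p i0)) else δ (p i0))
          = Function.update (φ μ) (p i0) (!(φ μ (p i0))) (p i0)
      rw [Function.update_self]
      simp only [h1, hφdef]
      by_cases hc : μ i0 ≠ γ i0
      · have hyes : ∃ i, p i = p i0 ∧ μ i ≠ γ i := ⟨i0, rfl, hc⟩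
        simp [hc, hyes]
      · have hno : ¬ ∃ i, p i = p i0 ∧ μ i ≠ γ i := by
          rintro ⟨i, hpi, hne⟩
          exact hc (by rwa [hpinj hpi] at hne)
        simp [hc, hno]
    · have h2 : (∃ i, p i = j ∧ gfold μ i0 i ≠ γ i) ↔ (∃ i, p i = j ∧ μ i ≠ γ i) := by
        constructor
        · rintro ⟨i, hpi, hne⟩
          refine ⟨i, hpi, ?_⟩
          have hii : i ≠ i0 := fun he => hj (by rw [← hpi, he])
          rwa [show gfold μ i0 i = μ i from Function.update_of_ne hii _ _] at hne
        · rintro ⟨i, hpi, hne⟩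
          refine ⟨i, hpi, ?_⟩
          have hii : i ≠ i0 := fun he => hj (by rw [← hpi, he])
          rwa [show gfold μ i0 i = μ i from Function.update_of_ne hii _ _]
      show (if ∃ i, p i = j ∧ gfold μ i0 i ≠ γ i then !(δ j) else δ j)
          = Function.update (φ μ) (p i0) (!(φ μ (p i0))) j
      rw [Function.update_of_ne hj]
      simp only [h2, hφdef]
  have card_lemma : ∀ (μ : Fin r → Bool) (i : Fin r), μ i ≠ γ i →
      (Finset.univ.filter fun j => gfold μ i j ≠ γ j)
        = (Finset.univ.filter fun j => μ j ≠ γ j).erase i := by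
    intro μ i hi
    ext j
    simp only [Finset.mem_filter, Finset.mem_erase, Finset.mem_univ, true_and]
    by_cases hj : j = i
    · subst hj
      have : gfold μ j j = !(μ j) := by simp [gfold]
      rw [this]
      cases hm : μ j <;> cases hg : γ j <;> simp_all
    · rw [show gfold μ i j = μ j from Function.update_of_ne hj _ _]
      simp [hj]
  have main : ∀ (n : ℕ) (μ : Fin r → Bool),
      (Finset.univ.filter fun j => μ j ≠ γ j).card = n →
      (∀ k, ∃ η : ℤˣ, gbeta s α' (φ μ) (p k) = (η : ℤ) • (w • gbeta s α μ k)) := by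
    intro n
    induction n with
    | zero =>
      intro μ hc
      have hμγ : μ = γ := by
        funext j
        by_contra hne
        have hmem : j ∈ Finset.univ.filter fun j => μ j ≠ γ j := by simp [hne]
        rw [Finset.card_eq_zero] at hc
        rw [hc] at hmem
        exact absurd hmem (Finset.notMem_empty j)
      subst hμγ
      simpa only [hφγ] using hpair
    | succ n ih =>
      intro μ hc
      have hne : ∃ i, μ i ≠ γ i := by
        by_contra hall
        push_neg at hall
        have : μ = γ := funext hall
        rw [this] at hc
        simp at hc
      obtain ⟨i, hi⟩ := hne
      have h1 : gfold (gfold μ i) i = μ := gfold_gfold μ i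
      have hcard : (Finset.univ.filter fun j => gfold μ i j ≠ γ j).card = n := by
        rw [card_lemma μ i hi, Finset.card_erase_of_mem (by simp [hi]), hc]
        simp
      have hprev := ih (gfold μ i) hcard
      have hstep := pair_fold s α α' p hp w hconj hneg hsq hsa hsa'
        (gfold μ i) (φ (gfold μ i)) i hprev
      rw [← hφfold (gfold μ i) i, h1] at hstep
      exact hstep
  refine ⟨φ, ⟨hφγ, fun μ k => main _ μ rfl k, hφfold⟩, ?_⟩
  rintro ψ ⟨hψγ, -, hψfold⟩
  have uni : ∀ (n : ℕ) (μ : Fin r → Bool),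
      (Finset.univ.filter fun j => μ j ≠ γ j).card = n → ψ μ = φ μ := by
    intro n
    induction n with
    | zero =>
      intro μ hc
      have hμγ : μ = γ := by
        funext j
        by_contra hne
        have hmem : j ∈ Finset.univ.filter fun j => μ j ≠ γ j := by simp [hne]
        rw [Finset.card_eq_zero] at hc
        rw [hc] at hmem
        exact absurd hmem (Finset.notMem_empty j)
      subst hμγ
      rw [hψγ, hφγ]
    | succ n ih =>
      intro μ hc
      have hne : ∃ i, μ i ≠ γ i := by
        by_contra hall
        push_neg at hall
        have : μ = γ := funext hall
        rw [this] at hc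
        simp at hc
      obtain ⟨i, hi⟩ := hne
      have h1 : gfold (gfold μ i) i = μ := gfold_gfold μ i
      have hcard : (Finset.univ.filter fun j => gfold μ i j ≠ γ j).card = n := by
        rw [card_lemma μ i hi, Finset.card_erase_of_mem (by simp [hi]), hc]
        simp
      calc ψ μ = ψ (gfold (gfold μ i) i) := by rw [h1]
        _ = gfold (ψ (gfold μ i)) (p i) := hψfold _ _
        _ = gfold (φ (gfold μ i)) (p i) := by rw [ih (gfold μ i) hcard]
        _ = φ (gfold (gfold μ i) i) := (hφfold _ _).symm
        _ = φ μ := by rw [h1]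
  funext μ
  exact uni _ μ rfl
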